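/- arXiv:0910.0722 — 8 statements merged into one kernel-verified Lean document; each statement's English description precedes it below -/
import Mathlib

section
/- Let Σ be a p×p positive semidefinite matrix, S ⊆ {1,…,p} with |S| = s ≥ 1, and define ‖f_β‖² = βᵀΣβ. Let β* minimize β ↦ ‖f_β − f⁰‖² + λ‖β‖₁ where f⁰ = f_{β⁰} and β⁰ is supported on S. If the compatibility constant φ satisfies s‖f_β‖² ≥ φ²‖β_S‖₁² for all β with ‖β_{S^c}‖₁ ≤ ‖β_S‖₁, then ‖f_{β*} − f⁰‖² + λ‖β*_{S^c}‖₁ ≤ λ²s/φ². -/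
open Finset Matrix

/-- ℓ₁ norm of a vector. -/
noncomputable def l1 {p : ℕ} (v : Fin p → ℝ) : ℝ := ∑ j, |v j|

/-- Restriction of a vector to an index set (zero outside). -/
noncomputable def rV {p : ℕ} (S : Finset (Fin p)) (v : Fin p → ℝ) : Fin p → ℝ :=
  fun j => if j ∈ S then v j else 0

/-- Quadratic form ‖f_β‖² = βᵀ Σ β. -/
noncomputable def quad {p : ℕ} (M : Matrix (Fin p) (Fin p) ℝ) (v : Fin p → ℝ) : ℝ :=
  v ⬝ᵥ M.mulVec v

/-!
With `Δ = β* - β⁰`, comparing the Lasso objective at `β*` and at `β⁰`, and using that `β⁰` lives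
on `S`, gives the basic inequality `‖f_Δ‖² + λ‖Δ_{Sᶜ}‖₁ ≤ λ‖Δ_S‖₁`. Its left side is at least
`λ‖Δ_{Sᶜ}‖₁`, so `Δ` lies in the cone of the compatibility condition, whence
`φ²‖Δ_S‖₁² ≤ s‖f_Δ‖²`. Writing `L` for the left side of the basic inequality,
`φ² L² ≤ λ² φ² ‖Δ_S‖₁² ≤ λ² s L`, i.e. `L ≤ λ² s / φ²`.
-/

section Vectors

variable {p : ℕ}

lemma l1_nonneg (v : Fin p → ℝ) : 0 ≤ l1 v :=
  Finset.sum_nonneg fun _ _ => abs_nonneg _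

lemma l1_le_l1_add_l1_sub (v w : Fin p → ℝ) : l1 w ≤ l1 v + l1 (v - w) := by
  unfold l1
  rw [← Finset.sum_add_distrib]
  refine Finset.sum_le_sum fun j _ => ?_
  simpa using abs_sub (v j) (v j - w j)

lemma l1_rV_add_l1_rV_compl (S : Finset (Fin p)) (v : Fin p → ℝ) :
    l1 (rV S v) + l1 (rV Sᶜ v) = l1 v := by
  unfold l1 rV
  rw [← Finset.sum_add_distrib]
  refine Finset.sum_congr rfl fun j _ => ?_
  by_cases h : j ∈ S <;> simp [h]

lemma rV_sub (S : Finset (Fin p)) (v w : Fin p → ℝ) : rV S (v - w) = rV S v - rV S w := by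
  funext j
  by_cases h : j ∈ S <;> simp [rV, h]

lemma rV_eq_self {S : Finset (Fin p)} {v : Fin p → ℝ} (hv : ∀ j ∉ S, v j = 0) : rV S v = v := by
  funext j
  by_cases h : j ∈ S <;> simp [rV, h, hv]

lemma rV_compl_eq_zero {S : Finset (Fin p)} {v : Fin p → ℝ} (hv : ∀ j ∉ S, v j = 0) :
    rV Sᶜ v = 0 := by
  funext j
  by_cases h : j ∈ S <;> simp [rV, h, hv]

lemma quad_zero (M : Matrix (Fin p) (Fin p) ℝ) : quad M 0 = 0 := by
  simp [quad]

end Vectors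

lemma lasso_basic_inequality {p : ℕ} {M : Matrix (Fin p) (Fin p) ℝ} {S : Finset (Fin p)}
    {lam : ℝ} (hlam : 0 ≤ lam) {β0 βstar : Fin p → ℝ} (hβ0 : ∀ j ∉ S, β0 j = 0)
    (hmin : quad M (βstar - β0) + lam * l1 βstar ≤ quad M (β0 - β0) + lam * l1 β0) :
    quad M (βstar - β0) + lam * l1 (rV Sᶜ βstar) ≤ lam * l1 (rV S (βstar - β0)) := by
  have hsplit := l1_rV_add_l1_rV_compl S βstar
  have htri : l1 β0 ≤ l1 (rV S βstar) + l1 (rV S (βstar - β0)) := by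
    simpa [rV_sub, rV_eq_self hβ0] using l1_le_l1_add_l1_sub (rV S βstar) (rV S β0)
  rw [sub_self, quad_zero, zero_add, ← hsplit] at hmin
  linarith [mul_le_mul_of_nonneg_left htri hlam]

lemma le_sq_div_of_compatibility {Q a A lam φ s : ℝ} (hQ : 0 ≤ Q) (ha : 0 ≤ lam * a)
    (hs : 0 ≤ s) (hφ : 0 < φ) (hbasic : Q + lam * a ≤ lam * A)
    (hcompat : φ ^ 2 * A ^ 2 ≤ s * Q) :
    Q + lam * a ≤ lam ^ 2 * s / φ ^ 2 := by
  set L := Q + lam * a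
  have hL : 0 ≤ L := add_nonneg hQ ha
  have hQL : Q ≤ L := le_add_of_nonneg_right ha
  have hsq : φ ^ 2 * L ^ 2 ≤ lam ^ 2 * s * L :=
    calc φ ^ 2 * L ^ 2 ≤ lam ^ 2 * (φ ^ 2 * A ^ 2) := by
          nlinarith [pow_le_pow_left₀ hL hbasic 2, sq_nonneg φ]
      _ ≤ lam ^ 2 * (s * L) :=
          mul_le_mul_of_nonneg_left (hcompat.trans (mul_le_mul_of_nonneg_left hQL hs)) (sq_nonneg _)
      _ = lam ^ 2 * s * L := by ring
  rw [le_div_iff₀ (by positivity)]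
  rcases hL.eq_or_lt with hL0 | hLpos
  · rw [← hL0, zero_mul]; positivity
  · nlinarith

theorem stmt0_general {p s : ℕ}
    (M : Matrix (Fin p) (Fin p) ℝ) (hM : M.PosSemidef)
    (S : Finset (Fin p))
    (lam φ : ℝ) (hlam : 0 < lam) (hφ : 0 < φ)
    (β0 βstar : Fin p → ℝ) (hβ0 : ∀ j ∉ S, β0 j = 0)
    (hmin : ∀ β : Fin p → ℝ,
      quad M (βstar - β0) + lam * l1 βstar ≤ quad M (β - β0) + lam * l1 β)
    (hcompat : ∀ β : Fin p → ℝ, l1 (rV Sᶜ β) ≤ l1 (rV S β) →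
      φ ^ 2 * (l1 (rV S β)) ^ 2 ≤ (s : ℝ) * quad M β) :
    quad M (βstar - β0) + lam * l1 (rV Sᶜ βstar) ≤ lam ^ 2 * s / φ ^ 2 := by
  have hQ : 0 ≤ quad M (βstar - β0) := hM.dotProduct_mulVec_nonneg _
  have hbasic := lasso_basic_inequality hlam.le hβ0 (hmin β0)
  have hcompl : rV Sᶜ (βstar - β0) = rV Sᶜ βstar := by
    rw [rV_sub, rV_compl_eq_zero hβ0, sub_zero]
  have hcone : l1 (rV Sᶜ (βstar - β0)) ≤ l1 (rV S (βstar - β0)) := by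
    rw [hcompl]
    exact le_of_mul_le_mul_left (by linarith) hlam
  exact le_sq_div_of_compatibility hQ (mul_nonneg hlam.le (l1_nonneg _)) s.cast_nonneg hφ
    hbasic (hcompat _ hcone)

/-- Noiseless Lasso oracle inequality under the compatibility condition. -/
theorem stmt0 {p s : ℕ} (hs : 1 ≤ s)
    (M : Matrix (Fin p) (Fin p) ℝ) (hM : M.PosSemidef)
    (S : Finset (Fin p)) (hScard : S.card = s)
    (lam φ : ℝ) (hlam : 0 < lam) (hφ : 0 < φ)
    (β0 βstar : Fin p → ℝ) (hβ0 : ∀ j ∉ S, β0 j = 0)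
    (hmin : ∀ β : Fin p → ℝ,
      quad M (βstar - β0) + lam * l1 βstar ≤ quad M (β - β0) + lam * l1 β)
    (hcompat : ∀ β : Fin p → ℝ, l1 (rV Sᶜ β) ≤ l1 (rV S β) →
      φ ^ 2 * (l1 (rV S β)) ^ 2 ≤ (s : ℝ) * quad M β) :
    quad M (βstar - β0) + lam * l1 (rV Sᶜ βstar) ≤ lam ^ 2 * s / φ ^ 2 :=
  stmt0_general M hM S lam φ hlam hφ β0 βstar hβ0 hmin hcompat
end

section
/- Let Σ be positive semidefinite, S ⊆ {1,…,p}, N ≥ |S|, L > 0. Suppose the restricted regression constant ϑ(S,N) = max{ |⟨f_{β_N}, f_{β_{N^c}}⟩|/‖f_{β_N}‖² : N ⊇ S, |N| ≤ N, β ∈ R(1,S,N) } satisfies ϑ(S,N) < 1/L, and the uniform eigenvalue is Λ²(S,N) = min{ λ_min(Σ_{N,N}) : N ⊇ S, |N| ≤ N }. Then the restricted eigenvalue satisfies φ²(L,S,N) ≥ (1 − Lϑ(S,N))² Λ²(S,N). -/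
open Finset Matrix

/-- squared ℓ₂ norm of a vector. -/
noncomputable def l2sq {p : ℕ} (v : Fin p → ℝ) : ℝ := ∑ j, (v j) ^ 2

/-- Inner product ⟨f_u, f_v⟩ = uᵀ Σ v. -/
noncomputable def quad2 {p : ℕ} (M : Matrix (Fin p) (Fin p) ℝ) (u v : Fin p → ℝ) : ℝ :=
  u ⬝ᵥ M.mulVec v

/-!
Write `β = u + v` with `u = β_N`, `v = β_{Nᶜ}`. The restricted regression bound gives
`⟨f_u, f_β⟩ = ‖f_u‖² + ⟨f_u, f_v⟩ ≥ (1 - Lϑ) ‖f_u‖²`, and Cauchy–Schwarz for the semi-inner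
product `Σ` upgrades this to `‖f_β‖² ≥ (1 - Lϑ)² ‖f_u‖²`. Since `u` is supported on `N`, the
uniform eigenvalue bounds `‖f_u‖²` below by `Λ² ‖β_N‖₂²`.
-/

theorem Matrix.PosSemidef.dotProduct_mulVec_sq_le {n : Type*} [Fintype n] [DecidableEq n]
    {M : Matrix n n ℝ} (hM : M.PosSemidef) (x y : n → ℝ) :
    (x ⬝ᵥ M *ᵥ y) ^ 2 ≤ (x ⬝ᵥ M *ᵥ x) * (y ⬝ᵥ M *ᵥ y) := by
  simpa only [Matrix.toBilin'_apply'] using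
    (Matrix.toBilin' M).apply_sq_le_of_symm
      (fun z => by simpa [Matrix.toBilin'_apply'] using hM.dotProduct_mulVec_nonneg z)
      (LinearMap.BilinForm.isSymm_iff.mp
        (isSymm_toBilin'_iff_isSymm.mpr (isHermitian_iff_isSymm.mp hM.isHermitian))) x y

theorem rV_add_rV_compl {p : ℕ} (s : Finset (Fin p)) (v : Fin p → ℝ) :
    rV s v + rV sᶜ v = v := by
  funext j
  by_cases hj : j ∈ s <;> simp [rV, hj]

theorem quad2_add_right {p : ℕ} (M : Matrix (Fin p) (Fin p) ℝ) (u v w : Fin p → ℝ) :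
    quad2 M u (v + w) = quad2 M u v + quad2 M u w := by
  simp only [quad2, mulVec_add, dotProduct_add]

theorem quad_nonneg {p : ℕ} {M : Matrix (Fin p) (Fin p) ℝ} (hM : M.PosSemidef)
    (v : Fin p → ℝ) : 0 ≤ quad M v := by
  simpa [quad] using hM.dotProduct_mulVec_nonneg v

theorem sq_mul_quad_le_of_mul_quad_le_quad2 {p : ℕ} {M : Matrix (Fin p) (Fin p) ℝ}
    (hM : M.PosSemidef) {x y : Fin p → ℝ} {s : ℝ} (hs : 0 ≤ s)
    (h : s * quad M y ≤ quad2 M y x) : s ^ 2 * quad M y ≤ quad M x := by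
  rcases (quad_nonneg hM y).eq_or_lt with hy | hy
  · rw [← hy, mul_zero]
    exact quad_nonneg hM x
  refine le_of_mul_le_mul_right ?_ hy
  calc s ^ 2 * quad M y * quad M y = (s * quad M y) ^ 2 := by ring
    _ ≤ quad2 M y x ^ 2 := pow_le_pow_left₀ (by positivity) h 2
    _ ≤ quad M y * quad M x := hM.dotProduct_mulVec_sq_le y x
    _ = quad M x * quad M y := mul_comm _ _

theorem stmt4_general {p : ℕ} (M : Matrix (Fin p) (Fin p) ℝ) (hM : M.PosSemidef)
    (S : Finset (Fin p)) (Nb : ℕ)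
    (L ϑ Λ : ℝ) (hϑ : L * ϑ < 1)
    -- restricted regression constant bound: ϑ(L,S,N) ≤ L·ϑ
    (hreg : ∀ Ns : Finset (Fin p), S ⊆ Ns → Ns.card ≤ Nb →
      ∀ β : Fin p → ℝ, l1 (rV Sᶜ β) ≤ L * l1 (rV S β) →
      (∀ j ∉ Ns, ∀ i ∈ Ns \ S, |β j| ≤ |β i|) →
      |quad2 M (rV Ns β) (rV Nsᶜ β)| ≤ L * ϑ * quad M (rV Ns β))
    -- uniform eigenvalue: Λ²(S,N) ≥ Λ²
    (heig : ∀ Ns : Finset (Fin p), S ⊆ Ns → Ns.card ≤ Nb →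
      ∀ v : Fin p → ℝ, (∀ j ∉ Ns, v j = 0) → Λ ^ 2 * l2sq v ≤ quad M v) :
    -- restricted eigenvalue bound: φ²(L,S,N) ≥ (1 − Lϑ)²Λ²
    ∀ Ns : Finset (Fin p), S ⊆ Ns → Ns.card ≤ Nb →
      ∀ β : Fin p → ℝ, l1 (rV Sᶜ β) ≤ L * l1 (rV S β) →
      (∀ j ∉ Ns, ∀ i ∈ Ns \ S, |β j| ≤ |β i|) →
      (1 - L * ϑ) ^ 2 * Λ ^ 2 * l2sq (rV Ns β) ≤ quad M β := by
  intro Ns hSN hcard β hcone hmono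
  have hcross := neg_le_of_abs_le (hreg Ns hSN hcard β hcone hmono)
  have hsplit : quad2 M (rV Ns β) β = quad M (rV Ns β) + quad2 M (rV Ns β) (rV Nsᶜ β) := by
    conv_lhs => arg 3; rw [← rV_add_rV_compl Ns β]
    rw [quad2_add_right]
    rfl
  have hproj : (1 - L * ϑ) ^ 2 * quad M (rV Ns β) ≤ quad M β :=
    sq_mul_quad_le_of_mul_quad_le_quad2 hM (by linarith) (by rw [hsplit]; linarith)
  have heigN : Λ ^ 2 * l2sq (rV Ns β) ≤ quad M (rV Ns β) :=
    heig Ns hSN hcard _ fun j hj => if_neg hj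
  calc (1 - L * ϑ) ^ 2 * Λ ^ 2 * l2sq (rV Ns β)
      = (1 - L * ϑ) ^ 2 * (Λ ^ 2 * l2sq (rV Ns β)) := mul_assoc _ _ _
    _ ≤ (1 - L * ϑ) ^ 2 * quad M (rV Ns β) := by gcongr
    _ ≤ quad M β := hproj

/-- The restricted regression condition implies the restricted eigenvalue condition:
if ϑ(L,S,N) = Lϑ(S,N) with Lϑ(S,N) < 1, then φ²(L,S,N) ≥ (1 − Lϑ(S,N))² Λ²(S,N). -/
theorem stmt4 {p : ℕ} (M : Matrix (Fin p) (Fin p) ℝ) (hM : M.PosSemidef)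
    (S : Finset (Fin p)) (Nb : ℕ) (hNb : S.card ≤ Nb)
    (L ϑ Λ : ℝ) (hL : 0 < L) (hΛ : 0 < Λ) (hϑ0 : 0 ≤ ϑ) (hϑ : L * ϑ < 1)
    -- restricted regression constant bound: ϑ(L,S,N) ≤ L·ϑ
    (hreg : ∀ Ns : Finset (Fin p), S ⊆ Ns → Ns.card ≤ Nb →
      ∀ β : Fin p → ℝ, l1 (rV Sᶜ β) ≤ L * l1 (rV S β) →
      (∀ j ∉ Ns, ∀ i ∈ Ns \ S, |β j| ≤ |β i|) →
      |quad2 M (rV Ns β) (rV Nsᶜ β)| ≤ L * ϑ * quad M (rV Ns β))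
    -- uniform eigenvalue: Λ²(S,N) ≥ Λ²
    (heig : ∀ Ns : Finset (Fin p), S ⊆ Ns → Ns.card ≤ Nb →
      ∀ v : Fin p → ℝ, (∀ j ∉ Ns, v j = 0) → Λ ^ 2 * l2sq v ≤ quad M v) :
    -- restricted eigenvalue bound: φ²(L,S,N) ≥ (1 − Lϑ)²Λ²
    ∀ Ns : Finset (Fin p), S ⊆ Ns → Ns.card ≤ Nb →
      ∀ β : Fin p → ℝ, l1 (rV Sᶜ β) ≤ L * l1 (rV S β) →
      (∀ j ∉ Ns, ∀ i ∈ Ns \ S, |β j| ≤ |β i|) →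
      (1 - L * ϑ) ^ 2 * Λ ^ 2 * l2sq (rV Ns β) ≤ quad M β :=
  stmt4_general M hM S Nb L ϑ Λ hϑ hreg heig
end

section
/- With Λ²(S,s) = λ_min(Σ_{S,S}) > 0 and |S| = s, the adaptive restricted regression constant satisfies ϑ_adaptive(S,s) ≤ √s · √(Σ_{k∈S} (Σ_{j∉S} |σ_{j,k}|)²) / Λ²(S,s), i.e., the cumulative coherence condition implies the adaptive restricted regression condition. -/
open Finset Matrix

/-!
Only the columns `k ∈ S` of `Σ` act on `β_S`, so each coordinate of `Σ_{S^c,S} β_S` is bounded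
by `∑_{k∈S} c_k |β_k|` with `c_k = ∑_{j∉S} |σ_{j,k}|`, which Cauchy–Schwarz bounds by
`‖c‖₂ ‖β_S‖₂`. Hence `|β_{S^c}ᵀ Σ β_S| ≤ ‖β_{S^c}‖₁ ‖c‖₂ ‖β_S‖₂ ≤ √s ‖c‖₂ ‖β_S‖₂²` on the cone,
and `‖β_S‖₂² ≤ β_Sᵀ Σ β_S / Λ²` by the eigenvalue bound.
-/

variable {p : ℕ}

lemma rV_apply_of_notMem {S : Finset (Fin p)} (v : Fin p → ℝ) {j : Fin p} (hj : j ∉ S) :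
    rV S v j = 0 :=
  if_neg hj

lemma l2sq_eq_sum_of_support {S : Finset (Fin p)} {w : Fin p → ℝ} (hw : ∀ k ∉ S, w k = 0) :
    l2sq w = ∑ k ∈ S, w k ^ 2 :=
  (Finset.sum_subset (Finset.subset_univ S) fun k _ hk => by rw [hw k hk, sq, mul_zero]).symm

lemma abs_dotProduct_le_l1_mul {u v : Fin p → ℝ} {B : ℝ} (hv : ∀ j, u j ≠ 0 → |v j| ≤ B) :
    |u ⬝ᵥ v| ≤ l1 u * B := by
  have hterm : ∀ j, |u j| * |v j| ≤ |u j| * B := by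
    intro j
    rcases eq_or_ne (u j) 0 with h | h
    · simp [h]
    · exact mul_le_mul_of_nonneg_left (hv j h) (abs_nonneg _)
  calc |u ⬝ᵥ v| ≤ ∑ j, |u j| * |v j| := by
        simpa only [dotProduct, abs_mul] using Finset.abs_sum_le_sum_abs (fun j => u j * v j) _
    _ ≤ ∑ j, |u j| * B := Finset.sum_le_sum fun j _ => hterm j
    _ = l1 u * B := by rw [l1, Finset.sum_mul]

lemma abs_mulVec_apply_le (M : Matrix (Fin p) (Fin p) ℝ) {S T : Finset (Fin p)}
    {w : Fin p → ℝ} (hw : ∀ k ∉ S, w k = 0) {j : Fin p} (hj : j ∈ T) :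
    |(M *ᵥ w) j| ≤ ∑ k ∈ S, (∑ i ∈ T, |M i k|) * |w k| := by
  have hrow : (M *ᵥ w) j = ∑ k ∈ S, M j k * w k :=
    (Finset.sum_subset (Finset.subset_univ S) fun k _ hk => by rw [hw k hk, mul_zero]).symm
  rw [hrow]
  refine (Finset.abs_sum_le_sum_abs _ _).trans (Finset.sum_le_sum fun k _ => ?_)
  rw [abs_mul]
  exact mul_le_mul_of_nonneg_right
    (Finset.single_le_sum (f := fun i => |M i k|) (fun i _ => abs_nonneg _) hj) (abs_nonneg _)

lemma sum_mul_abs_le_sqrt_mul_sqrt_l2sq {S : Finset (Fin p)} (c : Fin p → ℝ)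
    {w : Fin p → ℝ} (hw : ∀ k ∉ S, w k = 0) :
    ∑ k ∈ S, c k * |w k| ≤ Real.sqrt (∑ k ∈ S, c k ^ 2) * Real.sqrt (l2sq w) := by
  simpa only [l2sq_eq_sum_of_support hw, sq_abs] using
    Real.sum_mul_le_sqrt_mul_sqrt S c (fun k => |w k|)

lemma abs_quad2_rV_compl_le (M : Matrix (Fin p) (Fin p) ℝ) (S : Finset (Fin p))
    (β : Fin p → ℝ) :
    |quad2 M (rV Sᶜ β) (rV S β)| ≤ l1 (rV Sᶜ β) *
      (Real.sqrt (∑ k ∈ S, (∑ j ∈ Sᶜ, |M j k|) ^ 2) * Real.sqrt (l2sq (rV S β))) := by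
  have hw : ∀ k ∉ S, rV S β k = 0 := fun k hk => rV_apply_of_notMem β hk
  refine abs_dotProduct_le_l1_mul fun j hj => ?_
  have hjS : j ∈ Sᶜ := by
    by_contra h
    exact hj (rV_apply_of_notMem β h)
  exact (abs_mulVec_apply_le M hw hjS).trans (sum_mul_abs_le_sqrt_mul_sqrt_l2sq _ hw)

theorem stmt6_general {p : ℕ} (M : Matrix (Fin p) (Fin p) ℝ)
    (S : Finset (Fin p)) (Λsq : ℝ) (hΛ : 0 < Λsq)
    -- Λ²(S,s) = λ_min(Σ_{S,S}) ≥ Λsq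
    (heig : ∀ v : Fin p → ℝ, (∀ j ∉ S, v j = 0) → Λsq * l2sq v ≤ quad M v) :
    ∀ β : Fin p → ℝ,
      l1 (rV Sᶜ β) ≤ Real.sqrt S.card * Real.sqrt (l2sq (rV S β)) →
      |quad2 M (rV Sᶜ β) (rV S β)| ≤
        (Real.sqrt S.card * Real.sqrt (∑ k ∈ S, (∑ j ∈ Sᶜ, |M j k|) ^ 2) / Λsq) *
          quad M (rV S β) := by
  intro β hcone
  set C := Real.sqrt (∑ k ∈ S, (∑ j ∈ Sᶜ, |M j k|) ^ 2)
  set t := l2sq (rV S β)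
  have hC : 0 ≤ C := Real.sqrt_nonneg _
  have ht : 0 ≤ t := Finset.sum_nonneg fun _ _ => sq_nonneg _
  have hs : 0 ≤ Real.sqrt S.card := Real.sqrt_nonneg _
  have heigβ : Λsq * t ≤ quad M (rV S β) := heig _ fun k hk => rV_apply_of_notMem β hk
  calc |quad2 M (rV Sᶜ β) (rV S β)| ≤ l1 (rV Sᶜ β) * (C * Real.sqrt t) :=
        abs_quad2_rV_compl_le M S β
    _ ≤ (Real.sqrt S.card * Real.sqrt t) * (C * Real.sqrt t) :=
        mul_le_mul_of_nonneg_right hcone (mul_nonneg hC (Real.sqrt_nonneg _))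
    _ = (Real.sqrt S.card * C / Λsq) * (Λsq * t) := by
        rw [mul_mul_mul_comm, mul_comm (Real.sqrt t), mul_assoc, Real.mul_self_sqrt ht]
        field_simp
    _ ≤ (Real.sqrt S.card * C / Λsq) * quad M (rV S β) :=
        mul_le_mul_of_nonneg_left heigβ (div_nonneg (mul_nonneg hs hC) hΛ.le)

/-- Cumulative coherence bound on the adaptive restricted regression constant:
ϑ_adaptive(S,s) ≤ √s · √(∑_{k∈S} (∑_{j∉S} |σ_{j,k}|)²) / Λ²(S,s). -/
theorem stmt6 {p : ℕ} (M : Matrix (Fin p) (Fin p) ℝ) (hM : M.PosSemidef)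
    (S : Finset (Fin p)) (Λsq : ℝ) (hΛ : 0 < Λsq)
    -- Λ²(S,s) = λ_min(Σ_{S,S}) ≥ Λsq
    (heig : ∀ v : Fin p → ℝ, (∀ j ∉ S, v j = 0) → Λsq * l2sq v ≤ quad M v) :
    ∀ β : Fin p → ℝ,
      l1 (rV Sᶜ β) ≤ Real.sqrt S.card * Real.sqrt (l2sq (rV S β)) →
      |quad2 M (rV Sᶜ β) (rV S β)| ≤
        (Real.sqrt S.card * Real.sqrt (∑ k ∈ S, (∑ j ∈ Sᶜ, |M j k|) ^ 2) / Λsq) *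
          quad M (rV S β) :=
  stmt6_general M S Λsq hΛ heig
end

section
/- Let β* be the noiseless Lasso solution with KKT vector τ* (i.e., 2Σ(β* − β⁰) = −λτ*, ‖τ*‖_∞ ≤ 1, τ*_j = sign(β*_j) whenever β*_j ≠ 0). Let N ⊇ S with Σ_{N,N} invertible. Then 2‖(f_{β*_{N^c}})^{A_N}‖² = λ(β*_{N^c})ᵀ Σ_{N^c,N} Σ_{N,N}^{-1} τ*_N − λ‖β*_{N^c}‖₁, where ‖(f_{β_{N^c}})^{A_N}‖² = β_{N^c}ᵀ Σ_{N^c,N^c} β_{N^c} − β_{N^c}ᵀ Σ_{N^c,N} Σ_{N,N}^{-1} Σ_{N,N^c} β_{N^c} is the squared norm of the anti-projection. -/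
/-!
Write `δ = β* - β⁰`; the KKT conditions say `Σ δ = -(λ/2) τ*`. Since `β⁰` vanishes off `S ⊆ N`,
`δ` agrees with `β*` on `Nᶜ`. The `N`-block of the KKT system determines `δ_N` through `Σ_{N,N}⁻¹`,
and eliminating it from the `Nᶜ`-block paired with `β*_{Nᶜ}` turns the left side into the Schur
complement form `β*_{Nᶜ}ᵀ (Σ/Σ_{N,N}) β*_{Nᶜ}`, while on the right `β*_{Nᶜ} ⬝ τ*_{Nᶜ} = ‖β*_{Nᶜ}‖₁`
because `τ*` is a subgradient of `‖·‖₁` at `β*`.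
-/

open Finset Matrix

/-- Σ_{N,N}. -/
noncomputable def sub11 {p : ℕ} (M : Matrix (Fin p) (Fin p) ℝ) (N : Finset (Fin p)) :
    Matrix {x : Fin p // x ∈ N} {x : Fin p // x ∈ N} ℝ :=
  M.submatrix Subtype.val Subtype.val

/-- Σ_{N^c,N}. -/
noncomputable def sub21 {p : ℕ} (M : Matrix (Fin p) (Fin p) ℝ) (N : Finset (Fin p)) :
    Matrix {x : Fin p // x ∉ N} {x : Fin p // x ∈ N} ℝ :=
  M.submatrix Subtype.val Subtype.val

/-- Σ_{N,N^c}. -/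
noncomputable def sub12 {p : ℕ} (M : Matrix (Fin p) (Fin p) ℝ) (N : Finset (Fin p)) :
    Matrix {x : Fin p // x ∈ N} {x : Fin p // x ∉ N} ℝ :=
  M.submatrix Subtype.val Subtype.val

/-- Σ_{N^c,N^c}. -/
noncomputable def sub22 {p : ℕ} (M : Matrix (Fin p) (Fin p) ℝ) (N : Finset (Fin p)) :
    Matrix {x : Fin p // x ∉ N} {x : Fin p // x ∉ N} ℝ :=
  M.submatrix Subtype.val Subtype.val

/-- v_N as a vector indexed by N. -/
noncomputable def vecIn {p : ℕ} (N : Finset (Fin p)) (v : Fin p → ℝ) :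
    {x : Fin p // x ∈ N} → ℝ := fun i => v i.val

/-- v_{N^c} as a vector indexed by N^c. -/
noncomputable def vecOut {p : ℕ} (N : Finset (Fin p)) (v : Fin p → ℝ) :
    {x : Fin p // x ∉ N} → ℝ := fun i => v i.val

section BlockMatrix

variable {R : Type*} [CommRing R] {p : ℕ}

lemma mulVec_apply_eq_sum_mem_add_sum_not_mem {m : Type*} (M : Matrix m (Fin p) R)
    (N : Finset (Fin p)) (v : Fin p → R) (i : m) :
    (M *ᵥ v) i = ∑ k : {x // x ∈ N}, M i k * v k + ∑ k : {x // x ∉ N}, M i k * v k := by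
  convert (Fintype.sum_subtype_add_sum_subtype (· ∈ N) fun k => M i k * v k).symm
  rfl

lemma vecIn_mulVec (M : Matrix (Fin p) (Fin p) ℝ) (N : Finset (Fin p)) (v : Fin p → ℝ) :
    vecIn N (M *ᵥ v) = sub11 M N *ᵥ vecIn N v + sub12 M N *ᵥ vecOut N v := by
  funext i
  exact mulVec_apply_eq_sum_mem_add_sum_not_mem M N v i

lemma vecOut_mulVec (M : Matrix (Fin p) (Fin p) ℝ) (N : Finset (Fin p)) (v : Fin p → ℝ) :
    vecOut N (M *ᵥ v) = sub21 M N *ᵥ vecIn N v + sub22 M N *ᵥ vecOut N v := by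
  funext i
  exact mulVec_apply_eq_sum_mem_add_sum_not_mem M N v i

/-- The quadratic form of the Schur complement `D - C A⁻¹ B`, read off from any solution of
`[A B; C D] [x; b] = [u; w]`. -/
lemma dotProduct_schurComplement_of_mulVec_eq {m n : Type*} [Fintype m] [DecidableEq m]
    [Fintype n] {A : Matrix m m R} {B : Matrix m n R} {C : Matrix n m R} {D : Matrix n n R}
    (hA : IsUnit A.det) {x u : m → R} {b w : n → R}
    (h₁ : A *ᵥ x + B *ᵥ b = u) (h₂ : C *ᵥ x + D *ᵥ b = w) :
    b ⬝ᵥ D *ᵥ b - b ⬝ᵥ C *ᵥ (A⁻¹ *ᵥ (B *ᵥ b)) = b ⬝ᵥ w - b ⬝ᵥ C *ᵥ (A⁻¹ *ᵥ u) := by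
  have hx : x = A⁻¹ *ᵥ (u - B *ᵥ b) := by
    rw [← h₁, add_sub_cancel_right, mulVec_mulVec, nonsing_inv_mul _ hA, one_mulVec]
  rw [← h₂, hx, mulVec_sub, mulVec_sub, dotProduct_add, dotProduct_sub]
  ring

end BlockMatrix

lemma mul_eq_abs_of_sign_eq {x t : ℝ} (h : x ≠ 0 → t = Real.sign x) : x * t = |x| := by
  rcases lt_trichotomy x 0 with hx | rfl | hx
  · rw [h hx.ne, Real.sign_of_neg hx, abs_of_neg hx, mul_neg_one]
  · simp
  · rw [h hx.ne', Real.sign_of_pos hx, abs_of_pos hx, mul_one]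

lemma l1_rV_compl {p : ℕ} (N : Finset (Fin p)) (v : Fin p → ℝ) :
    l1 (rV Nᶜ v) = ∑ j : {x // x ∉ N}, |v j| := by
  rw [l1, ← Fintype.sum_subtype_add_sum_subtype (· ∈ N)]
  simp only [rV, Finset.mem_compl, if_neg (not_not.mpr (Subtype.prop _)), abs_zero,
    Finset.sum_const_zero, zero_add]
  exact Finset.sum_congr rfl fun j _ => by rw [if_pos j.2]

lemma vecOut_dotProduct_vecOut_of_sign_eq {p : ℕ} (N : Finset (Fin p)) {β τ : Fin p → ℝ}
    (hτ : ∀ j, β j ≠ 0 → τ j = Real.sign (β j)) :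
    vecOut N β ⬝ᵥ vecOut N τ = l1 (rV Nᶜ β) := by
  rw [l1_rV_compl, dotProduct]
  exact Finset.sum_congr rfl fun j _ => mul_eq_abs_of_sign_eq (hτ j)

theorem stmt8_general {p : ℕ} (M : Matrix (Fin p) (Fin p) ℝ)
    (S N : Finset (Fin p)) (hSN : S ⊆ N)
    (lam : ℝ)
    (β0 βstar τ : Fin p → ℝ) (hβ0 : ∀ j ∉ S, β0 j = 0)
    -- KKT conditions for the noiseless Lasso
    (hkkt : ∀ j, 2 * M.mulVec (βstar - β0) j = -(lam * τ j))
    (hτsign : ∀ j, βstar j ≠ 0 → τ j = Real.sign (βstar j))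
    -- Σ_{N,N} is invertible
    (hA : IsUnit (sub11 M N).det) :
    2 * (vecOut N βstar ⬝ᵥ (sub22 M N).mulVec (vecOut N βstar)
        - vecOut N βstar ⬝ᵥ (sub21 M N).mulVec
            ((sub11 M N)⁻¹.mulVec ((sub12 M N).mulVec (vecOut N βstar))))
      = lam * (vecOut N βstar ⬝ᵥ (sub21 M N).mulVec ((sub11 M N)⁻¹.mulVec (vecIn N τ)))
        - lam * l1 (rV Nᶜ βstar) := by
  set δ := βstar - β0
  have hδ : M *ᵥ δ = (-(lam / 2)) • τ := by
    funext j
    simp only [Pi.smul_apply, smul_eq_mul]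
    linarith [hkkt j]
  have hδout : vecOut N δ = vecOut N βstar := by
    funext j
    simp [δ, vecOut, hβ0 j.1 fun h => j.2 (hSN h)]
  have hN := vecIn_mulVec M N δ
  have hNc := vecOut_mulVec M N δ
  rw [hδ, hδout] at hN hNc
  rw [dotProduct_schurComplement_of_mulVec_eq hA hN.symm hNc.symm,
    ← vecOut_dotProduct_vecOut_of_sign_eq N hτsign, show vecIn N (-(lam / 2) • τ) = -(lam / 2) • vecIn N τ from rfl,
    show vecOut N (-(lam / 2) • τ) = -(lam / 2) • vecOut N τ from rfl,
    mulVec_smul, mulVec_smul, dotProduct_smul, dotProduct_smul, smul_eq_mul, smul_eq_mul]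
  ring

/-- KKT identity: 2‖(f_{β*_{N^c}})^{A_N}‖² =
λ(β*_{N^c})ᵀ Σ_{N^c,N} Σ_{N,N}^{-1} τ*_N − λ‖β*_{N^c}‖₁. -/
theorem stmt8 {p : ℕ} (M : Matrix (Fin p) (Fin p) ℝ) (hM : M.PosSemidef)
    (S N : Finset (Fin p)) (hSN : S ⊆ N)
    (lam : ℝ) (hlam : 0 < lam)
    (β0 βstar τ : Fin p → ℝ) (hβ0 : ∀ j ∉ S, β0 j = 0)
    -- KKT conditions for the noiseless Lasso
    (hkkt : ∀ j, 2 * M.mulVec (βstar - β0) j = -(lam * τ j))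
    (hτ1 : ∀ j, |τ j| ≤ 1)
    (hτsign : ∀ j, βstar j ≠ 0 → τ j = Real.sign (βstar j))
    -- Σ_{N,N} is invertible
    (hA : IsUnit (sub11 M N).det) :
    2 * (vecOut N βstar ⬝ᵥ (sub22 M N).mulVec (vecOut N βstar)
        - vecOut N βstar ⬝ᵥ (sub21 M N).mulVec
            ((sub11 M N)⁻¹.mulVec ((sub12 M N).mulVec (vecOut N βstar))))
      = lam * (vecOut N βstar ⬝ᵥ (sub21 M N).mulVec ((sub11 M N)⁻¹.mulVec (vecIn N τ)))
        - lam * l1 (rV Nᶜ βstar) :=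
  stmt8_general M S N hSN lam β0 βstar τ hβ0 hkkt hτsign hA
end

section
/- Suppose for some N ⊇ S with |N| ≤ N, Σ_{N,N} is invertible and sup_{‖τ_N‖_∞ ≤ 1} ‖Σ_{N^c,N} Σ_{N,N}^{-1} τ_N‖_∞ < 1. Then the noiseless Lasso solution β* satisfies β*_{N^c} = 0; in particular the active set S_* of β* satisfies |S_* ∖ S| ≤ |N| − s. -/
open Finset Matrix

/-!
Write `u` for the restriction of `β*` to `N^c`; since `β⁰` vanishes off `S ⊆ N`, it is also the
restriction of `β* - β⁰`. Solving the KKT rows indexed by `N` for `(β* - β⁰)_N` and substituting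
into the rows indexed by `N^c` (block Gaussian elimination) gives
`(Σ/Σ_{N,N}) u = (λ/2) (w - τ_{N^c})` with `w = Σ_{N^c,N} Σ_{N,N}⁻¹ τ_N`, where `Σ/Σ_{N,N}` is the
Schur complement. It is positive semidefinite, and `u ⬝ τ_{N^c} = ‖u‖₁` by the sign condition, so
`‖u‖₁ ≤ u ⬝ w`. As `‖w‖_∞ < 1`, this forces `u = 0`.
-/

namespace Matrix

variable {α β R : Type*} [Fintype α] [Fintype β] [DecidableEq α]

theorem schurComplement_mulVec_eq [CommRing R] {A : Matrix α α R} (hA : IsUnit A.det)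
    {B : Matrix β α R} {C : Matrix α β R} {D : Matrix β β R} {x g : α → R} {u h : β → R}
    (h₁ : A *ᵥ x + C *ᵥ u = g) (h₂ : B *ᵥ x + D *ᵥ u = h) :
    (D - B * A⁻¹ * C) *ᵥ u = h - (B * A⁻¹) *ᵥ g := by
  have hx : x = A⁻¹ *ᵥ g - (A⁻¹ * C) *ᵥ u := by
    rw [← h₁, mulVec_add, mulVec_mulVec, nonsing_inv_mul A hA, one_mulVec, mulVec_mulVec,
      add_sub_cancel_right]
  rw [← h₂, hx, sub_mulVec, mulVec_sub, mulVec_mulVec, mulVec_mulVec, Matrix.mul_assoc]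
  abel

theorem PosSemidef.dotProduct_schurComplement_mulVec_nonneg [CommRing R] [PartialOrder R]
    [StarRing R] {A : Matrix α α R} {B : Matrix β α R} {C : Matrix α β R} {D : Matrix β β R}
    (hM : (fromBlocks A C B D).PosSemidef) (hA : IsUnit A.det) (u : β → R) :
    0 ≤ star u ⬝ᵥ ((D - B * A⁻¹ * C) *ᵥ u) := by
  have hz : fromBlocks A C B D *ᵥ Sum.elim (-(A⁻¹ * C) *ᵥ u) u
      = Sum.elim (0 : α → R) ((D - B * A⁻¹ * C) *ᵥ u) := by
    rw [fromBlocks_mulVec, Sum.elim_comp_inl, Sum.elim_comp_inr, neg_mulVec, mulVec_neg,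
      mulVec_neg, mulVec_mulVec, ← Matrix.mul_assoc, mul_nonsing_inv A hA, Matrix.one_mul,
      neg_add_cancel, sub_mulVec, mulVec_mulVec, Matrix.mul_assoc, neg_add_eq_sub]
  simpa only [hz, Function.star_sumElim, sumElim_dotProduct_sumElim, dotProduct_zero, zero_add]
    using hM.dotProduct_mulVec_nonneg (Sum.elim (-(A⁻¹ * C) *ᵥ u) u)

end Matrix

theorem eq_zero_of_sum_abs_le_dotProduct {β R : Type*} [Fintype β] [Ring R] [LinearOrder R]
    [IsStrictOrderedRing R] {u w : β → R} (hw : ∀ j, |w j| < 1) (h : ∑ j, |u j| ≤ u ⬝ᵥ w) :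
    u = 0 := by
  by_contra hu
  obtain ⟨j, hj⟩ := Function.ne_iff.mp hu
  have hle : ∀ i, u i * w i ≤ |u i| := fun i =>
    calc u i * w i ≤ |u i| * |w i| := by rw [← abs_mul]; exact le_abs_self _
      _ ≤ |u i| := mul_le_of_le_one_right (abs_nonneg _) (hw i).le
  have hlt : u j * w j < |u j| :=
    calc u j * w j ≤ |u j| * |w j| := by rw [← abs_mul]; exact le_abs_self _
      _ < |u j| := mul_lt_of_lt_one_right (abs_pos.mpr hj) (hw j)
  exact (Finset.sum_lt_sum (fun i _ => hle i) ⟨j, Finset.mem_univ j, hlt⟩).not_ge h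

theorem Real.mul_sign_self (x : ℝ) : x * Real.sign x = |x| := by
  rcases lt_trichotomy x 0 with hx | rfl | hx
  · rw [Real.sign_of_neg hx, abs_of_neg hx, mul_neg_one]
  · simp
  · rw [Real.sign_of_pos hx, abs_of_pos hx, mul_one]

section Lasso

variable {α β : Type*} [Fintype α] [Fintype β] [DecidableEq α]

theorem lasso_comp_inr_eq_zero_of_irrepresentable {M : Matrix (α ⊕ β) (α ⊕ β) ℝ}
    (hM : M.PosSemidef) (hA : IsUnit M.toBlocks₁₁.det) {lam : ℝ} (hlam : 0 < lam)
    {b τ : α ⊕ β → ℝ} (hkkt : ∀ i, 2 * (M *ᵥ b) i = -(lam * τ i))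
    (hsign : ∀ j, b (.inr j) * τ (.inr j) = |b (.inr j)|)
    (hirr : ∀ j, |((M.toBlocks₂₁ * M.toBlocks₁₁⁻¹) *ᵥ (τ ∘ Sum.inl)) j| < 1) :
    b ∘ Sum.inr = 0 := by
  rw [← fromBlocks_toBlocks M] at hM hkkt
  set u := b ∘ Sum.inr
  have hkkt₁ :
      M.toBlocks₁₁ *ᵥ (b ∘ Sum.inl) + M.toBlocks₁₂ *ᵥ u = -(lam / 2) • (τ ∘ Sum.inl) := by
    funext i
    have := hkkt (.inl i)
    rw [fromBlocks_mulVec] at this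
    simp only [Sum.elim_inl, Pi.smul_apply, smul_eq_mul, Function.comp_apply] at this ⊢
    linarith
  have hkkt₂ :
      M.toBlocks₂₁ *ᵥ (b ∘ Sum.inl) + M.toBlocks₂₂ *ᵥ u = -(lam / 2) • (τ ∘ Sum.inr) := by
    funext j
    have := hkkt (.inr j)
    rw [fromBlocks_mulVec] at this
    simp only [Sum.elim_inr, Pi.smul_apply, smul_eq_mul, Function.comp_apply] at this ⊢
    linarith
  have hℓ1 : u ⬝ᵥ (τ ∘ Sum.inr) = ∑ j, |u j| := Finset.sum_congr rfl fun j _ => hsign j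
  set w := (M.toBlocks₂₁ * M.toBlocks₁₁⁻¹) *ᵥ (τ ∘ Sum.inl)
  have hschur := hM.dotProduct_schurComplement_mulVec_nonneg hA u
  rw [star_trivial, schurComplement_mulVec_eq hA hkkt₁ hkkt₂, mulVec_smul, dotProduct_sub,
    dotProduct_smul, dotProduct_smul, hℓ1, smul_eq_mul, smul_eq_mul] at hschur
  have hkey : 0 ≤ lam / 2 * (u ⬝ᵥ w - ∑ j, |u j|) := by linarith
  exact eq_zero_of_sum_abs_le_dotProduct hirr
    (sub_nonneg.mp (nonneg_of_mul_nonneg_right hkey (half_pos hlam)))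

end Lasso

/-- If for some N ⊇ S the strict uniform irrepresentable condition
sup_{‖τ_N‖_∞ ≤ 1} ‖Σ_{N^c,N} Σ_{N,N}^{-1} τ_N‖_∞ < 1 holds, then the Lasso
solution vanishes outside N; in particular |S_* ∖ S| ≤ |N| − s. -/
theorem stmt9 {p : ℕ} (M : Matrix (Fin p) (Fin p) ℝ) (hM : M.PosSemidef)
    (S N : Finset (Fin p)) (hSN : S ⊆ N)
    (lam : ℝ) (hlam : 0 < lam)
    (β0 βstar τ : Fin p → ℝ) (hβ0 : ∀ j ∉ S, β0 j = 0)
    -- KKT conditions for the noiseless Lasso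
    (hkkt : ∀ j, 2 * M.mulVec (βstar - β0) j = -(lam * τ j))
    (hτ1 : ∀ j, |τ j| ≤ 1)
    (hτsign : ∀ j, βstar j ≠ 0 → τ j = Real.sign (βstar j))
    -- Σ_{N,N} is invertible
    (hA : IsUnit (sub11 M N).det)
    -- strict uniform irrepresentable condition on N
    (hirr : ∀ τN : {x : Fin p // x ∈ N} → ℝ, (∀ i, |τN i| ≤ 1) →
      ∀ j : {x : Fin p // x ∉ N},
        |(sub21 M N).mulVec ((sub11 M N)⁻¹.mulVec τN) j| < 1) :
    (∀ j ∉ N, βstar j = 0) ∧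
      ({j | βstar j ≠ 0} \ (S : Set (Fin p))).ncard ≤ N.card - S.card := by
  have hβ0N : ∀ j ∉ N, β0 j = 0 := fun j hj => hβ0 j fun hjS => hj (hSN hjS)
  have hsign : ∀ j, βstar j * τ j = |βstar j| := fun j => by
    by_cases hj : βstar j = 0
    · simp [hj]
    · rw [hτsign j hj, Real.mul_sign_self]
  let e := Equiv.sumCompl (· ∈ N)
  have hout : ∀ j ∉ N, βstar j = 0 := by
    have h := lasso_comp_inr_eq_zero_of_irrepresentable (hM.submatrix e) hA hlam
      (b := (βstar - β0) ∘ e) (τ := τ ∘ e)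
      (fun i => by simpa [submatrix_mulVec_equiv, Function.comp_assoc] using hkkt (e i))
      (fun j => by simpa [e, hβ0N j j.2] using hsign j)
      (fun j => by rw [← mulVec_mulVec]; exact hirr _ (fun i => hτ1 _) j)
    intro j hj
    simpa [e, hβ0N j hj] using congrFun h ⟨j, hj⟩
  refine ⟨hout, ?_⟩
  calc ({j | βstar j ≠ 0} \ (S : Set (Fin p))).ncard
      ≤ ((N \ S : Finset (Fin p)) : Set (Fin p)).ncard :=
        Set.ncard_le_ncard (fun j ⟨hj, hjS⟩ => by simpa [hjS] using not_imp_comm.mp (hout j) hj)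
          (Finset.finite_toSet _)
    _ = N.card - S.card := by rw [Set.ncard_coe_finset, Finset.card_sdiff_of_subset hSN]
end

section
/- Let Σ₀, Σ₁ be p×p symmetric matrices with max_{j,k}|(Σ₁)_{j,k} − (Σ₀)_{j,k}| ≤ λ̃. Then for every β with ‖β_{S^c}‖₁ ≤ L‖β_S‖₁ and βᵀΣ₀β > 0: |βᵀΣ₁β/βᵀΣ₀β − 1| ≤ (L+1)² λ̃ s / φ²₀, where φ₀ = φ_compatible(Σ₀, L, S) is the compatibility constant of Σ₀. -/
open Finset Matrix

/-! On the cone `‖β_{Sᶜ}‖₁ ≤ L‖β_S‖₁` we have `‖β‖₁ ≤ (L+1)‖β_S‖₁`, and an entrywise perturbation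
of size `λ̃` moves `βᵀΣβ` by at most `λ̃‖β‖₁²`. The compatibility condition bounds `‖β_S‖₁²` by
`s βᵀΣ₀β / φ₀²`, so the perturbation is at most `(L+1)²λ̃s/φ₀²` times `βᵀΣ₀β`. -/

section

variable {p : ℕ}

lemma l1_eq_l1_rV_add_l1_rV_compl (S : Finset (Fin p)) (v : Fin p → ℝ) :
    l1 v = l1 (rV S v) + l1 (rV Sᶜ v) := by
  unfold l1 rV
  rw [← sum_add_distrib]
  refine sum_congr rfl fun j _ => ?_
  by_cases h : j ∈ S <;> simp [h]

lemma l1_le_mul_l1_rV_of_cone {S : Finset (Fin p)} {L : ℝ} {v : Fin p → ℝ}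
    (hcone : l1 (rV Sᶜ v) ≤ L * l1 (rV S v)) : l1 v ≤ (L + 1) * l1 (rV S v) := by
  rw [l1_eq_l1_rV_add_l1_rV_compl S v]
  linarith

lemma quad_sub (M N : Matrix (Fin p) (Fin p) ℝ) (v : Fin p → ℝ) :
    quad (M - N) v = quad M v - quad N v := by
  simp only [quad, sub_mulVec, dotProduct_sub]

lemma abs_quad_le_mul_l1_sq {M : Matrix (Fin p) (Fin p) ℝ} {c : ℝ} (hM : ∀ j k, |M j k| ≤ c)
    (v : Fin p → ℝ) : |quad M v| ≤ c * l1 v ^ 2 := by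
  calc |quad M v| = |∑ j, ∑ k, v j * M j k * v k| := by
        simp only [quad, dotProduct, mulVec, Finset.mul_sum, mul_assoc]
    _ ≤ ∑ j, ∑ k, |v j| * c * |v k| := by
        refine (abs_sum_le_sum_abs _ _).trans (sum_le_sum fun j _ => ?_)
        refine (abs_sum_le_sum_abs _ _).trans (sum_le_sum fun k _ => ?_)
        rw [abs_mul, abs_mul]
        gcongr
        exact hM j k
    _ = c * l1 v ^ 2 := by
        rw [l1, sq, sum_mul_sum, Finset.mul_sum]
        refine sum_congr rfl fun j _ => ?_
        rw [Finset.mul_sum]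
        exact sum_congr rfl fun k _ => by ring

end

lemma abs_div_sub_one_le_of_abs_sub_le {a b c : ℝ} (hb : 0 < b) (h : |a - b| ≤ c * b) :
    |a / b - 1| ≤ c := by
  rwa [div_sub_one hb.ne', abs_div, abs_of_pos hb, div_le_iff₀ hb]

theorem stmt15_general {p s : ℕ}
    (M0 M1 : Matrix (Fin p) (Fin p) ℝ)
    (S : Finset (Fin p))
    (L lamt φ0 : ℝ) (hlamt : 0 ≤ lamt) (hφ0 : 0 < φ0)
    -- d_∞(Σ₁, Σ₀) ≤ λ̃
    (hd : ∀ j k, |M1 j k - M0 j k| ≤ lamt)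
    -- φ₀ is the (Σ₀,L,S)-compatibility constant
    (hcompat : ∀ β : Fin p → ℝ, l1 (rV Sᶜ β) ≤ L * l1 (rV S β) →
      φ0 ^ 2 * (l1 (rV S β)) ^ 2 ≤ (s : ℝ) * quad M0 β) :
    ∀ β : Fin p → ℝ, l1 (rV Sᶜ β) ≤ L * l1 (rV S β) → 0 < quad M0 β →
      |quad M1 β / quad M0 β - 1| ≤ (L + 1) ^ 2 * lamt * s / φ0 ^ 2 := by
  intro β hcone hpos
  have hl1 : l1 β ^ 2 ≤ ((L + 1) * l1 (rV S β)) ^ 2 :=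
    pow_le_pow_left₀ (l1_nonneg β) (l1_le_mul_l1_rV_of_cone hcone) 2
  have hS : l1 (rV S β) ^ 2 ≤ s * quad M0 β / φ0 ^ 2 := by
    rw [le_div_iff₀ (by positivity), mul_comm]
    exact hcompat β hcone
  refine abs_div_sub_one_le_of_abs_sub_le hpos ?_
  calc |quad M1 β - quad M0 β| = |quad (M1 - M0) β| := by rw [quad_sub]
    _ ≤ lamt * l1 β ^ 2 := abs_quad_le_mul_l1_sq (fun j k => by simpa using hd j k) β
    _ ≤ lamt * ((L + 1) ^ 2 * (s * quad M0 β / φ0 ^ 2)) := by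
        rw [mul_pow] at hl1
        gcongr
        exact hl1.trans (by gcongr)
    _ = (L + 1) ^ 2 * lamt * s / φ0 ^ 2 * quad M0 β := by ring

/-- Perturbation of the quadratic form under an entrywise approximation of the
Gram matrix: |βᵀΣ₁β/βᵀΣ₀β − 1| ≤ (L+1)²λ̃s/φ₀² on the compatibility cone. -/
theorem stmt15 {p s : ℕ}
    (M0 M1 : Matrix (Fin p) (Fin p) ℝ)
    (hM0 : M0.IsSymm) (hM1 : M1.IsSymm)
    (S : Finset (Fin p)) (hScard : S.card = s)
    (L lamt φ0 : ℝ) (hL : 0 < L) (hlamt : 0 ≤ lamt) (hφ0 : 0 < φ0)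
    -- d_∞(Σ₁, Σ₀) ≤ λ̃
    (hd : ∀ j k, |M1 j k - M0 j k| ≤ lamt)
    -- φ₀ is the (Σ₀,L,S)-compatibility constant
    (hcompat : ∀ β : Fin p → ℝ, l1 (rV Sᶜ β) ≤ L * l1 (rV S β) →
      φ0 ^ 2 * (l1 (rV S β)) ^ 2 ≤ (s : ℝ) * quad M0 β) :
    ∀ β : Fin p → ℝ, l1 (rV Sᶜ β) ≤ L * l1 (rV S β) → 0 < quad M0 β →
      |quad M1 β / quad M0 β - 1| ≤ (L + 1) ^ 2 * lamt * s / φ0 ^ 2 :=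
  stmt15_general M0 M1 S L lamt φ0 hlamt hφ0 hd hcompat
end

section
/- Let s > 2, 0 ≤ ρ < 1 − 1/(s−2), S = {1,…,s}, and Σ = diag(Σ₁₁, I_{p−s}) with Σ₁₁ = diag(B, I_{s−2}) and B = [[1,ρ],[ρ,1]]. Then the compatibility constant satisfies φ²_compatible(S) ≥ ((s−2)(1−ρ) − 1)/((s−2)(1−ρ) + 1), while the restricted eigenvalue satisfies φ²(S,s) = λ_min(Σ_{S,S}) = 1−ρ. In particular for 1−ρ = 3/(s−2): φ²_compatible(S) ≥ 1/2 while φ²(S,s) = 3/(s−2). -/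
/-!
Since `ρ ≥ 0`, the block `B` satisfies `a² + b² + 2ρab ≥ (1 - ρ)(a² + b²)`, with equality at
`(a, b) = (1, -1)`; this gives the eigenvalue `1 - ρ`. For the compatibility bound write
`u = |β₀| + |β₁|` and `t` for the ℓ₁ norm of `β` on the other `s - 2` coordinates of `S`:
the block contributes at least `(1 - ρ) u² / 2` and, by Cauchy–Schwarz, the identity part at
least `t² / (s - 2)`. Minimising `c u² + d t²` over `u + t = ‖β_S‖₁` gives the value
`cd / (c + d) · ‖β_S‖₁²`, so `βᵀΣβ ≥ (1 - ρ) / ((s - 2)(1 - ρ) + 2) · ‖β_S‖₁²`, which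
dominates the stated constant.
-/

open Finset Matrix

section Norms

variable {p : ℕ}

lemma l1_rV (S : Finset (Fin p)) (v : Fin p → ℝ) : l1 (rV S v) = ∑ j ∈ S, |v j| := by
  simp only [l1, rV, apply_ite abs, abs_zero]
  rw [sum_ite_mem, univ_inter]

lemma sum_sq_le_l2sq (S : Finset (Fin p)) (v : Fin p → ℝ) : ∑ j ∈ S, v j ^ 2 ≤ l2sq v :=
  sum_le_sum_of_subset_of_nonneg (subset_univ S) fun _ _ _ => sq_nonneg _

lemma l2sq_single_sub_single {i k : Fin p} (hik : i ≠ k) :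
    l2sq (Pi.single i 1 - Pi.single k 1 : Fin p → ℝ) = 2 := by
  norm_num [l2sq, Pi.single_apply, sub_sq, sum_add_distrib, sum_sub_distrib, ite_pow, hik.symm]

end Norms

lemma Finset.sum_eq_add_add_sum_sdiff_pair {ι M : Type*} [DecidableEq ι] [AddCommMonoid M]
    {S : Finset ι} {i k : ι} (hik : i ≠ k) (hi : i ∈ S) (hk : k ∈ S) (f : ι → M) :
    ∑ j ∈ S, f j = f i + f k + ∑ j ∈ S \ {i, k}, f j := by
  rw [← sum_sdiff (insert_subset hi (singleton_subset_iff.mpr hk)), sum_pair hik, add_comm]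

lemma one_sub_mul_sq_add_sq_le {ρ : ℝ} (hρ : 0 ≤ ρ) (a b : ℝ) :
    (1 - ρ) * (a ^ 2 + b ^ 2) ≤ a ^ 2 + b ^ 2 + 2 * ρ * (a * b) := by
  nlinarith [mul_nonneg hρ (sq_nonneg (a + b))]

lemma sub_one_div_add_one_le {m r : ℝ} (hm : 0 < m) (hr : 0 ≤ r) :
    (m * r - 1) / (m * r + 1) ≤ (m + 2) * r / (m * r + 2) := by
  have hmr : 0 ≤ m * r := mul_nonneg hm.le hr
  rw [div_le_div_iff₀ (by linarith) (by linarith)]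
  nlinarith [mul_nonneg hmr hr]

lemma mul_div_add_mul_sq_add_le {c d : ℝ} (hc : 0 ≤ c) (hd : 0 ≤ d) (u t : ℝ) :
    c * d / (c + d) * (u + t) ^ 2 ≤ c * u ^ 2 + d * t ^ 2 := by
  rcases (add_nonneg hc hd).eq_or_lt with hcd | hcd
  · rw [← hcd, div_zero, zero_mul]
    positivity
  · rw [div_mul_eq_mul_div, div_le_iff₀ hcd]
    nlinarith [sq_nonneg (c * u - d * t)]

section CorrelatedPair

variable {p : ℕ} {ρ : ℝ} {i k : Fin p}

lemma of_pair_eq_one_add_smul_single (hi : (i : ℕ) = 0) (hk : (k : ℕ) = 1) (ρ : ℝ) :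
    (Matrix.of fun j l : Fin p =>
      if j = l then (1 : ℝ)
      else if ((j : ℕ) = 0 ∧ (l : ℕ) = 1) ∨ ((j : ℕ) = 1 ∧ (l : ℕ) = 0) then ρ
      else 0) = 1 + ρ • (single i k 1 + single k i 1) := by
  ext j l
  simp only [of_apply, Matrix.add_apply, one_apply, Matrix.smul_apply, single_apply, Fin.ext_iff,
    hi, hk, smul_eq_mul]
  split_ifs <;> first | (exfalso; omega) | ring

lemma quad_one_add_smul_single (ρ : ℝ) (i k : Fin p) (v : Fin p → ℝ) :
    quad (1 + ρ • (single i k 1 + single k i 1)) v = l2sq v + 2 * ρ * (v i * v k) := by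
  rw [quad, add_mulVec, one_mulVec, smul_mulVec, add_mulVec, single_mulVec_eq, single_mulVec_eq,
    dotProduct_add, dotProduct_smul, dotProduct_add, dotProduct_smul, dotProduct_smul,
    dotProduct_single, dotProduct_single]
  simp only [l2sq, dotProduct, smul_eq_mul, sq]
  ring

lemma one_sub_mul_l2sq_le (hρ : 0 ≤ ρ) (hik : i ≠ k) (v : Fin p → ℝ) :
    (1 - ρ) * l2sq v ≤ l2sq v + 2 * ρ * (v i * v k) := by
  have hpair := sum_sq_le_l2sq {i, k} v
  rw [sum_pair hik] at hpair
  nlinarith [one_sub_mul_sq_add_sq_le hρ (v i) (v k)]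

lemma mul_sum_abs_sq_le_l2sq_add (hρ0 : 0 ≤ ρ) (hρ1 : ρ ≤ 1) (hik : i ≠ k)
    {S : Finset (Fin p)} (hi : i ∈ S) (hk : k ∈ S) {m : ℝ} (hm : 0 < m)
    (hS : (#S : ℝ) ≤ m + 2) (v : Fin p → ℝ) :
    (1 - ρ) / (m * (1 - ρ) + 2) * (∑ j ∈ S, |v j|) ^ 2 ≤ l2sq v + 2 * ρ * (v i * v k) := by
  set T := S \ {i, k}
  set u := |v i| + |v k|
  set t := ∑ j ∈ T, |v j|
  have hT : (#T : ℝ) ≤ m := by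
    have hsplit := card_sdiff_add_card_eq_card (insert_subset hi (singleton_subset_iff.2 hk))
    rw [card_pair hik] at hsplit
    have : (#T : ℝ) + 2 = #S := by exact_mod_cast hsplit
    linarith
  have hpair : (1 - ρ) / 2 * u ^ 2 ≤ (1 - ρ) * (v i ^ 2 + v k ^ 2) := by
    have := add_sq_le (a := |v i|) (b := |v k|)
    rw [sq_abs, sq_abs] at this
    nlinarith
  have hrest : 1 / m * t ^ 2 ≤ ∑ j ∈ T, v j ^ 2 := by
    have hcs : t ^ 2 ≤ #T * ∑ j ∈ T, v j ^ 2 := by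
      simpa only [sq_abs] using sq_sum_le_card_mul_sum_sq (s := T) (f := fun j => |v j|)
    rw [one_div_mul_eq_div, div_le_iff₀' hm]
    exact hcs.trans (by gcongr)
  have hl2 : v i ^ 2 + v k ^ 2 + ∑ j ∈ T, v j ^ 2 ≤ l2sq v := by
    simpa only [sum_eq_add_add_sum_sdiff_pair hik hi hk] using sum_sq_le_l2sq S v
  have hweight : (1 - ρ) / (m * (1 - ρ) + 2) = (1 - ρ) / 2 * (1 / m) / ((1 - ρ) / 2 + 1 / m) := by
    field_simp
  rw [sum_eq_add_add_sum_sdiff_pair hik hi hk, hweight]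
  calc _ ≤ (1 - ρ) / 2 * u ^ 2 + 1 / m * t ^ 2 :=
        mul_div_add_mul_sq_add_le (by linarith) (by positivity) u t
    _ ≤ (1 - ρ) * (v i ^ 2 + v k ^ 2) + ∑ j ∈ T, v j ^ 2 := add_le_add hpair hrest
    _ ≤ _ := by linarith [one_sub_mul_sq_add_sq_le hρ0 (v i) (v k)]

lemma sub_one_div_add_one_mul_sum_abs_sq_le (hρ0 : 0 ≤ ρ) (hρ1 : ρ ≤ 1) (hik : i ≠ k)
    {S : Finset (Fin p)} (hi : i ∈ S) (hk : k ∈ S) {m : ℝ} (hm : 0 < m)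
    (hS : (#S : ℝ) ≤ m + 2) (v : Fin p → ℝ) :
    (m * (1 - ρ) - 1) / (m * (1 - ρ) + 1) * (∑ j ∈ S, |v j|) ^ 2 ≤
      (m + 2) * (l2sq v + 2 * ρ * (v i * v k)) :=
  calc _ ≤ (m + 2) * ((1 - ρ) / (m * (1 - ρ) + 2) * (∑ j ∈ S, |v j|) ^ 2) := by
        rw [← mul_assoc, mul_div_assoc']
        exact mul_le_mul_of_nonneg_right (sub_one_div_add_one_le hm (sub_nonneg.2 hρ1))
          (sq_nonneg _)
    _ ≤ _ := by
        gcongr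
        exact mul_sum_abs_sq_le_l2sq_add hρ0 hρ1 hik hi hk hm hS v

lemma exists_l2sq_add_eq_one_sub_mul (hik : i ≠ k) {S : Finset (Fin p)} (hi : i ∈ S)
    (hk : k ∈ S) :
    ∃ v : Fin p → ℝ, v ≠ 0 ∧ (∀ j ∉ S, v j = 0) ∧
      l2sq v + 2 * ρ * (v i * v k) = (1 - ρ) * l2sq v := by
  refine ⟨Pi.single i 1 - Pi.single k 1, fun h => ?_, fun j hj => ?_, ?_⟩
  · simpa [hik] using congrFun h i
  · have hji : j ≠ i := fun h => hj (h ▸ hi)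
    have hjk : j ≠ k := fun h => hj (h ▸ hk)
    simp [hji, hjk]
  · rw [l2sq_single_sub_single hik, Pi.sub_apply, Pi.sub_apply, Pi.single_eq_same,
      Pi.single_eq_same, Pi.single_eq_of_ne hik, Pi.single_eq_of_ne hik.symm]
    ring

end CorrelatedPair

/-- Example where the compatibility constant is well-behaved while the restricted
eigenvalue φ²(S,s) = λ_min(Σ_{S,S}) = 1−ρ can be tiny: Σ = diag(diag(B, I_{s−2}), I_{p−s})
with B = [[1,ρ],[ρ,1]], S = {1,…,s}. -/
theorem stmt18 {p s : ℕ} (hs : 2 < s) (hsp : s ≤ p)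
    (ρ : ℝ) (hρ0 : 0 ≤ ρ) (hρ1 : ρ < 1 - 1 / ((s : ℝ) - 2))
    (S : Finset (Fin p)) (hS : S = Finset.univ.filter fun j : Fin p => (j : ℕ) < s)
    (M : Matrix (Fin p) (Fin p) ℝ)
    (hMdef : M = Matrix.of fun j k : Fin p =>
      if j = k then (1 : ℝ)
      else if ((j : ℕ) = 0 ∧ (k : ℕ) = 1) ∨ ((j : ℕ) = 1 ∧ (k : ℕ) = 0) then ρ
      else 0) :
    -- compatibility constant lower bound
    (∀ β : Fin p → ℝ, l1 (rV Sᶜ β) ≤ l1 (rV S β) →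
      (((s : ℝ) - 2) * (1 - ρ) - 1) / (((s : ℝ) - 2) * (1 - ρ) + 1) *
        (l1 (rV S β)) ^ 2 ≤ (s : ℝ) * quad M β) ∧
    -- restricted eigenvalue φ²(S,s) = λ_min(Σ_{S,S}) = 1 − ρ
    ((∀ v : Fin p → ℝ, (∀ j ∉ S, v j = 0) → (1 - ρ) * l2sq v ≤ quad M v) ∧
      (∃ v : Fin p → ℝ, v ≠ 0 ∧ (∀ j ∉ S, v j = 0) ∧ quad M v = (1 - ρ) * l2sq v)) ∧
    -- in particular, with 1 − ρ = 3/(s−2), the compatibility bound equals 1/2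
    (1 - ρ = 3 / ((s : ℝ) - 2) →
      (((s : ℝ) - 2) * (1 - ρ) - 1) / (((s : ℝ) - 2) * (1 - ρ) + 1) = 1 / 2) := by
  have hp : 2 ≤ p := by omega
  set i : Fin p := ⟨0, by omega⟩
  set k : Fin p := ⟨1, by omega⟩
  have hik : i ≠ k := by simp [i, k, Fin.ext_iff]
  have hquad (v : Fin p → ℝ) : quad M v = l2sq v + 2 * ρ * (v i * v k) := by
    rw [hMdef, of_pair_eq_one_add_smul_single (i := i) (k := k) rfl rfl, quad_one_add_smul_single]
  have hmemS (j : Fin p) : j ∈ S ↔ (j : ℕ) < s := by simp [hS]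
  have hiS : i ∈ S := (hmemS i).2 (show 0 < s by omega)
  have hkS : k ∈ S := (hmemS k).2 (show 1 < s by omega)
  have hm : (0 : ℝ) < s - 2 := by
    have : (2 : ℝ) < s := by exact_mod_cast hs
    linarith
  have hρ : ρ ≤ 1 := by
    have : 0 < 1 / ((s : ℝ) - 2) := by positivity
    linarith
  have hcard : (#S : ℝ) ≤ (s - 2 : ℝ) + 2 := by
    rw [sub_add_cancel]
    exact_mod_cast hS ▸ Fin.card_filter_val_lt.trans_le (min_le_right _ _)
  refine ⟨fun β _ => ?_, ⟨fun v _ => ?_, ?_⟩, fun h => ?_⟩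
  · have := sub_one_div_add_one_mul_sum_abs_sq_le hρ0 hρ hik hiS hkS hm hcard β
    rwa [sub_add_cancel, ← l1_rV, ← hquad] at this
  · rw [hquad]
    exact one_sub_mul_l2sq_le hρ0 hik v
  · obtain ⟨v, hv0, hvS, hv⟩ := exists_l2sq_add_eq_one_sub_mul (ρ := ρ) hik hiS hkS
    exact ⟨v, hv0, hvS, (hquad v).trans hv⟩
  · rw [h]
    field_simp
    norm_num
end

section
/- Consider the noisy Lasso β̂ = argmin_β { (1/n)Σᵢ(Yᵢ − f_β(Xᵢ))² + λ‖β‖₁ } with Yᵢ = f⁰(Xᵢ) + εᵢ, f⁰ = f_{β⁰}, β⁰ supported on S, |S| = s. Let λ₀ = 2 max_j |(ψ_j, ε)_n| and take λ > λ₀, setting L = (λ+λ₀)/(λ−λ₀). If the compatibility condition holds for the empirical Gram matrix Σ̂ with constant φ = φ_compatible(Σ̂, L, S) > 0, then ‖f̂ − f⁰‖²_n + (2λ₀/(L−1))‖β̂_{S^c}‖₁ ≤ 4(L+1)²λ₀²s / ((L−1)²φ²). -/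
open Finset Matrix

/-!
With `Δ = β̂ - β⁰`, the basic inequality, the bound `2 (ε, XΔ)_n ≤ λ₀ ‖Δ‖₁` and the triangle
inequality on `S` give `‖XΔ‖²_n + (λ - λ₀) ‖Δ_{Sᶜ}‖₁ ≤ (λ + λ₀) ‖Δ_S‖₁`. So `Δ` lies in the cone
`‖Δ_{Sᶜ}‖₁ ≤ L ‖Δ_S‖₁`, where compatibility bounds `‖Δ_S‖₁` by `√(s ‖XΔ‖²_n) / φ`; the resulting
self-bounding inequality gives `(λ + λ₀)² s / φ²`, and `2 (L + 1) λ₀ / (L - 1) = 2λ ≥ λ + λ₀`.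
-/

section L1

variable {p : ℕ}

lemma l1_rV_le_add (S : Finset (Fin p)) (u v : Fin p → ℝ) :
    l1 (rV S u) ≤ l1 (rV S v) + l1 (rV S (v - u)) := by
  unfold l1
  rw [← sum_add_distrib]
  refine sum_le_sum fun j _ => ?_
  by_cases h : j ∈ S
  · simp only [rV, h, if_true, Pi.sub_apply]
    linarith [abs_sub_abs_le_abs_sub (u j) (v j), abs_sub_comm (u j) (v j)]
  · simp [rV, h]

variable {S : Finset (Fin p)} {β0 : Fin p → ℝ}

lemma rV_compl_eq_zero_s19 (hβ0 : ∀ j ∉ S, β0 j = 0) : rV Sᶜ β0 = 0 := by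
  funext j
  by_cases h : j ∈ S <;> simp [rV, h, hβ0]

lemma rV_compl_sub_eq (hβ0 : ∀ j ∉ S, β0 j = 0) (β : Fin p → ℝ) :
    rV Sᶜ (β - β0) = rV Sᶜ β := by
  funext j
  by_cases h : j ∈ S <;> simp [rV, h, hβ0]

lemma l1_rV_eq (hβ0 : ∀ j ∉ S, β0 j = 0) : l1 (rV S β0) = l1 β0 := by
  rw [l1_eq_l1_rV_add_l1_rV_compl S β0, rV_compl_eq_zero_s19 hβ0]
  simp [l1]

end L1

lemma two_mul_sum_mul_le_mul_l1 {p : ℕ} {g : Fin p → ℝ} {c : ℝ} (hg : ∀ j, 2 * |g j| ≤ c)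
    (Δ : Fin p → ℝ) : 2 * ∑ j, g j * Δ j ≤ c * l1 Δ := by
  rw [l1, mul_sum, mul_sum]
  refine sum_le_sum fun j _ => ?_
  calc 2 * (g j * Δ j) ≤ 2 * |g j| * |Δ j| := by
        rw [mul_assoc, ← abs_mul]; exact mul_le_mul_of_nonneg_left (le_abs_self _) two_pos.le
    _ ≤ c * |Δ j| := mul_le_mul_of_nonneg_right (hg j) (abs_nonneg _)

section Design

variable {ι : Type*} [Fintype ι] {p : ℕ} (X : Matrix ι (Fin p) ℝ)

lemma sum_mul_mulVec_eq (ε : ι → ℝ) (Δ : Fin p → ℝ) :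
    ∑ i, ε i * (X *ᵥ Δ) i = ∑ j, (∑ i, X i j * ε i) * Δ j := by
  change ε ⬝ᵥ (X *ᵥ Δ) = _
  rw [dotProduct_mulVec]
  simp only [dotProduct, vecMul, mul_comm (ε _)]

lemma two_mul_noise_inner_le {ε : ι → ℝ} {N lam0 : ℝ}
    (hlam0 : ∀ j, 2 * |(∑ i, X i j * ε i) / N| ≤ lam0) (Δ : Fin p → ℝ) :
    2 * ((∑ i, ε i * (X *ᵥ Δ) i) / N) ≤ lam0 * l1 Δ := by
  have h := two_mul_sum_mul_le_mul_l1 hlam0 Δ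
  rw [sum_mul_mulVec_eq, sum_div]
  simpa only [div_mul_eq_mul_div] using h

lemma lasso_basic_inequality_s19 {Y ε : ι → ℝ} {β0 βhat : Fin p → ℝ} {N lam : ℝ}
    (hε : ∀ i, ε i = Y i - (X *ᵥ β0) i)
    (hmin : (∑ i, (Y i - (X *ᵥ βhat) i) ^ 2) / N + lam * l1 βhat ≤
      (∑ i, (Y i - (X *ᵥ β0) i) ^ 2) / N + lam * l1 β0) :
    (∑ i, (X *ᵥ (βhat - β0)) i ^ 2) / N + lam * l1 βhat ≤
      2 * ((∑ i, ε i * (X *ᵥ (βhat - β0)) i) / N) + lam * l1 β0 := by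
  have hres : ∀ i, (Y i - (X *ᵥ βhat) i) ^ 2 =
      (Y i - (X *ᵥ β0) i) ^ 2 - 2 * (ε i * (X *ᵥ (βhat - β0)) i) + (X *ᵥ (βhat - β0)) i ^ 2 := by
    intro i
    rw [mulVec_sub, Pi.sub_apply, hε]
    ring
  simp only [hres, sum_add_distrib, sum_sub_distrib, ← mul_sum, add_div, sub_div,
    mul_div_assoc] at hmin
  linarith

end Design

lemma lasso_cone_inequality {p : ℕ} {S : Finset (Fin p)} {β0 βhat : Fin p → ℝ} {T lam lam0 : ℝ}
    (hβ0 : ∀ j ∉ S, β0 j = 0) (hlam : 0 ≤ lam)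
    (hbasic : T + lam * l1 βhat ≤ lam0 * l1 (βhat - β0) + lam * l1 β0) :
    T + (lam - lam0) * l1 (rV Sᶜ βhat) ≤ (lam + lam0) * l1 (rV S (βhat - β0)) := by
  have htri := mul_le_mul_of_nonneg_left (l1_rV_le_add S β0 βhat) hlam
  rw [l1_rV_eq hβ0] at htri
  rw [l1_eq_l1_rV_add_l1_rV_compl S βhat, l1_eq_l1_rV_add_l1_rV_compl S (βhat - β0),
    rV_compl_sub_eq hβ0] at hbasic
  linarith

lemma le_sq_mul_div_sq_of_le_mul {K a c s φ : ℝ} (hc : 0 ≤ c) (hs : 0 ≤ s) (hφ : φ ≠ 0)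
    (hK : K ≤ c * a) (hcompat : φ ^ 2 * a ^ 2 ≤ s * K) : K ≤ c ^ 2 * s / φ ^ 2 := by
  have hφ2 : 0 < φ ^ 2 := by positivity
  rw [le_div_iff₀ hφ2]
  rcases le_or_gt a 0 with ha | ha
  · nlinarith [mul_nonpos_of_nonneg_of_nonpos hc ha]
  · have haφ : φ ^ 2 * a ≤ s * c := by
      refine le_of_mul_le_mul_right ?_ ha
      nlinarith [mul_le_mul_of_nonneg_left hK hs]
    nlinarith [mul_le_mul_of_nonneg_left haφ hc]

lemma lasso_tuning_constants {lam lam0 L : ℝ} (hlam0 : 0 < lam0) (hlam : lam0 < lam)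
    (hL : L = (lam + lam0) / (lam - lam0)) :
    2 * lam0 / (L - 1) = lam - lam0 ∧ 4 * (L + 1) ^ 2 * lam0 ^ 2 / (L - 1) ^ 2 = (2 * lam) ^ 2 := by
  have hsub : lam - lam0 ≠ 0 := (sub_pos.2 hlam).ne'
  have hL1 : L - 1 = 2 * lam0 / (lam - lam0) := by rw [hL]; field_simp; ring
  have hL2 : L + 1 = 2 * lam / (lam - lam0) := by rw [hL]; field_simp; ring
  rw [hL1, hL2]
  constructor
  · field_simp
  · field_simp; ring

theorem stmt19_general {n p : ℕ}
    (X : Matrix (Fin n) (Fin p) ℝ) (Y : Fin n → ℝ)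
    (S : Finset (Fin p)) (s : ℕ)
    (β0 : Fin p → ℝ) (hβ0 : ∀ j ∉ S, β0 j = 0)
    (ε : Fin n → ℝ) (hε : ∀ i, ε i = Y i - X.mulVec β0 i)
    (lam lam0 : ℝ) (hlam0pos : 0 < lam0)
    -- λ₀ = 2 max_j |(ψ_j, ε)_n|
    (hlam0 : ∀ j, 2 * |(∑ i, X i j * ε i) / n| ≤ lam0)
    (hlam : lam0 < lam)
    (L : ℝ) (hL : L = (lam + lam0) / (lam - lam0))
    (βhat : Fin p → ℝ)
    -- β̂ minimizes the penalized empirical risk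
    (hmin : ∀ β : Fin p → ℝ,
      (∑ i, (Y i - X.mulVec βhat i) ^ 2) / n + lam * l1 βhat ≤
        (∑ i, (Y i - X.mulVec β i) ^ 2) / n + lam * l1 β)
    (φ : ℝ) (hφ : 0 < φ)
    -- (Σ̂, L, S)-compatibility condition
    (hcompat : ∀ β : Fin p → ℝ, l1 (rV Sᶜ β) ≤ L * l1 (rV S β) →
      φ ^ 2 * (l1 (rV S β)) ^ 2 ≤ (s : ℝ) * ((∑ i, (X.mulVec β i) ^ 2) / n)) :
    (∑ i, (X.mulVec (βhat - β0) i) ^ 2) / n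
        + (2 * lam0 / (L - 1)) * l1 (rV Sᶜ βhat)
      ≤ 4 * (L + 1) ^ 2 * lam0 ^ 2 * s / ((L - 1) ^ 2 * φ ^ 2) := by
  have hbasic := lasso_basic_inequality_s19 X hε (hmin β0)
  have hcross := two_mul_noise_inner_le X hlam0 (βhat - β0)
  have hcone := lasso_cone_inequality hβ0 (hlam0pos.trans hlam).le
    (hbasic.trans (add_le_add hcross le_rfl))
  have hT : 0 ≤ (∑ i, (X *ᵥ (βhat - β0)) i ^ 2) / n :=
    div_nonneg (sum_nonneg fun _ _ => sq_nonneg _) n.cast_nonneg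
  have hΔcone : l1 (rV Sᶜ (βhat - β0)) ≤ L * l1 (rV S (βhat - β0)) := by
    rw [rV_compl_sub_eq hβ0, hL, div_mul_eq_mul_div, le_div_iff₀ (sub_pos.2 hlam)]
    linarith
  obtain ⟨hslope, hbound⟩ := lasso_tuning_constants hlam0pos hlam hL
  calc _ = (∑ i, (X *ᵥ (βhat - β0)) i ^ 2) / n + (lam - lam0) * l1 (rV Sᶜ βhat) := by
        rw [hslope]
    _ ≤ (lam + lam0) ^ 2 * s / φ ^ 2 := by
        refine le_sq_mul_div_sq_of_le_mul (by linarith) s.cast_nonneg hφ.ne' hcone ?_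
        refine (hcompat _ hΔcone).trans (mul_le_mul_of_nonneg_left ?_ s.cast_nonneg)
        exact le_add_of_nonneg_right (mul_nonneg (sub_pos.2 hlam).le (l1_nonneg _))
    _ ≤ (2 * lam) ^ 2 * s / φ ^ 2 := by gcongr <;> linarith
    _ = _ := by rw [← hbound, div_mul_eq_mul_div, div_div]

/-- Oracle inequality for the noisy Lasso under the compatibility condition
for the empirical Gram matrix Σ̂ = XᵀX/n. -/
theorem stmt19 {n p : ℕ} (hn : 0 < n)
    (X : Matrix (Fin n) (Fin p) ℝ) (Y : Fin n → ℝ)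
    (S : Finset (Fin p)) (s : ℕ) (hScard : S.card = s)
    (β0 : Fin p → ℝ) (hβ0 : ∀ j ∉ S, β0 j = 0)
    (ε : Fin n → ℝ) (hε : ∀ i, ε i = Y i - X.mulVec β0 i)
    (lam lam0 : ℝ) (hlam0pos : 0 < lam0)
    -- λ₀ = 2 max_j |(ψ_j, ε)_n|
    (hlam0 : ∀ j, 2 * |(∑ i, X i j * ε i) / n| ≤ lam0)
    (hlam : lam0 < lam)
    (L : ℝ) (hL : L = (lam + lam0) / (lam - lam0))
    (βhat : Fin p → ℝ)
    -- β̂ minimizes the penalized empirical risk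
    (hmin : ∀ β : Fin p → ℝ,
      (∑ i, (Y i - X.mulVec βhat i) ^ 2) / n + lam * l1 βhat ≤
        (∑ i, (Y i - X.mulVec β i) ^ 2) / n + lam * l1 β)
    (φ : ℝ) (hφ : 0 < φ)
    -- (Σ̂, L, S)-compatibility condition
    (hcompat : ∀ β : Fin p → ℝ, l1 (rV Sᶜ β) ≤ L * l1 (rV S β) →
      φ ^ 2 * (l1 (rV S β)) ^ 2 ≤ (s : ℝ) * ((∑ i, (X.mulVec β i) ^ 2) / n)) :
    (∑ i, (X.mulVec (βhat - β0) i) ^ 2) / n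
        + (2 * lam0 / (L - 1)) * l1 (rV Sᶜ βhat)
      ≤ 4 * (L + 1) ^ 2 * lam0 ^ 2 * s / ((L - 1) ^ 2 * φ ^ 2) :=
  stmt19_general X Y S s β0 hβ0 ε hε lam lam0 hlam0pos hlam0 hlam L hL βhat hmin φ hφ hcompat
end
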